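/- arXiv:1309.0230 — 7 statements merged into one kernel-verified Lean document; each statement's English description precedes it below -/
import Mathlib

section
/- For an odd prime p and integers α, β with 0 ≤ α, β ≤ p-1 and α + β ≥ p, the sum ∑_{k=0}^{p-1} (-1)^k C(α,k) C(β,k) C(-1-α-β,k) is congruent to 0 modulo p^2. -/
/-
Over ℕ the summand is `C(α,k) C(β,k) C(α+β+k,k)`, and the sum is the perfect square
`C(α+β,α)²`: expand `C(α+β+k,k) = ∑ᵢ C(α+β,i) C(k,i)` by Vandermonde, swap the sums, and
evaluate the inner sum over `k` by a second Vandermonde convolution. Since `α, β < p ≤ α + β`,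
`p` divides `(α+β)!` but neither `α!` nor `β!`, so `p ∣ C(α+β,α)` and `p²` divides the square.
-/

/-- Generalized binomial coefficient `C(x,k) = x(x-1)⋯(x-k+1)/k!` for rational `x`. -/
def gbinom (x : ℚ) (k : ℕ) : ℚ := (∏ i ∈ Finset.range k, (x - i)) / (Nat.factorial k)

open Finset Nat

lemma gbinom_eq_eval_descPochhammer (x : ℚ) (k : ℕ) :
    gbinom x k = (descPochhammer ℚ k).eval x / k ! := by
  rw [gbinom, descPochhammer_eval_eq_prod_range]

lemma gbinom_natCast (n k : ℕ) : gbinom n k = n.choose k := by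
  rw [gbinom_eq_eval_descPochhammer, descPochhammer_eval_eq_descFactorial,
    descFactorial_eq_factorial_mul_choose, cast_mul,
    mul_div_cancel_left₀ _ (cast_ne_zero.2 (factorial_ne_zero k))]

lemma gbinom_neg_one_sub_natCast (n k : ℕ) :
    gbinom (-1 - n) k = (-1) ^ k * (n + k).choose k := by
  have hasc := ascPochhammer_eval_neg_eq_descPochhammer (R := ℚ) (-1 - n) k
  rw [show -(-1 - n : ℚ) = (n + 1 : ℕ) by push_cast; ring,
    ascPochhammer_nat_eq_natCast_ascFactorial, ascFactorial_eq_factorial_mul_choose,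
    cast_mul] at hasc
  have hsign : (-1 : ℚ) ^ k * (-1) ^ k = 1 := by rw [← mul_pow]; norm_num
  rw [gbinom_eq_eval_descPochhammer, div_eq_iff (cast_ne_zero.2 (factorial_ne_zero k))]
  linear_combination -(-1 : ℚ) ^ k * hasc - (descPochhammer ℚ k).eval (-1 - n : ℚ) * hsign

namespace Nat

lemma sum_range_choose_mul_choose_sub (m n k : ℕ) :
    ∑ i ∈ range (k + 1), m.choose i * n.choose (k - i) = (m + n).choose k := by
  rw [add_choose_eq, Finset.Nat.sum_antidiagonal_eq_sum_range_succ_mk]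

lemma sum_range_choose_mul_choose (a b : ℕ) :
    ∑ i ∈ range (a + 1), a.choose i * b.choose i = (a + b).choose a := by
  rw [add_comm a b, ← sum_range_choose_mul_choose_sub]
  refine sum_congr rfl fun i hi => ?_
  rw [choose_symm (mem_range_succ_iff.1 hi), mul_comm]

lemma sum_range_choose_mul_choose_mul_choose {a i : ℕ} (b : ℕ) (hi : i ≤ a) :
    ∑ k ∈ range (a + 1), a.choose k * b.choose k * k.choose i
      = b.choose i * (b - i + a).choose (a - i) := by
  have hlow : ∑ k ∈ range i, a.choose k * b.choose k * k.choose i = 0 :=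
    sum_eq_zero fun k hk => by rw [choose_eq_zero_of_lt (mem_range.1 hk), mul_zero]
  rw [show a + 1 = i + (a - i + 1) by omega, sum_range_add, hlow, zero_add,
    ← sum_range_choose_mul_choose_sub, mul_sum]
  refine sum_congr rfl fun t ht => ?_
  have ht : t ≤ a - i := mem_range_succ_iff.1 ht
  rw [mul_assoc, choose_mul (le_add_right i t), add_tsub_cancel_left,
    ← choose_symm (show i + t ≤ a by omega), show a - (i + t) = a - i - t by omega]
  ring

lemma sum_range_choose_mul_choose_mul_add_choose (a b : ℕ) :
    ∑ k ∈ range (a + 1), a.choose k * b.choose k * (a + b + k).choose k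
      = ((a + b).choose a) ^ 2 := by
  have hexpand : ∀ k ∈ range (a + 1),
      (a + b + k).choose k = ∑ i ∈ range (a + 1), (a + b).choose i * k.choose i := by
    intro k hk
    rw [add_comm (a + b), ← sum_range_choose_mul_choose,
      eventually_constant_sum (fun i hi => by rw [choose_eq_zero_of_lt hi, mul_zero])
        (mem_range.1 hk)]
    exact sum_congr rfl fun i _ => mul_comm _ _
  have hcombine : ∀ i ∈ range (a + 1),
      (a + b).choose i * (b.choose i * (b - i + a).choose (a - i))
        = (a + b).choose a * (a.choose i * b.choose i) := by
    intro i hi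
    have hia : i ≤ a := mem_range_succ_iff.1 hi
    rcases lt_or_ge b i with hbi | hib
    · simp [choose_eq_zero_of_lt hbi]
    · rw [show b - i + a = a + b - i by omega, mul_left_comm, ← choose_mul hia]
      ring
  calc ∑ k ∈ range (a + 1), a.choose k * b.choose k * (a + b + k).choose k
      = ∑ i ∈ range (a + 1), (a + b).choose i *
          ∑ k ∈ range (a + 1), a.choose k * b.choose k * k.choose i := by
        rw [sum_congr rfl fun k hk => by rw [hexpand k hk, mul_sum], sum_comm]
        refine sum_congr rfl fun i _ => ?_
        rw [mul_sum]
        exact sum_congr rfl fun k _ => by ring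
    _ = (a + b).choose a * ∑ i ∈ range (a + 1), a.choose i * b.choose i := by
        rw [mul_sum]
        refine sum_congr rfl fun i hi => ?_
        rw [sum_range_choose_mul_choose_mul_choose b (mem_range_succ_iff.1 hi), hcombine i hi]
    _ = ((a + b).choose a) ^ 2 := by rw [sum_range_choose_mul_choose, sq]

end Nat

theorem alt_triple_binom_sum_div_general (p : ℕ) (hp : p.Prime)
    (α β : ℕ) (hα : α ≤ p - 1) (hβ : β ≤ p - 1) (hab : p ≤ α + β) :
    ∃ m : ℤ, ∑ k ∈ Finset.range p,
        (-1 : ℚ)^k * gbinom (α : ℚ) k * gbinom (β : ℚ) k * gbinom (-1 - α - β) k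
      = (p : ℚ)^2 * m := by
  have hαp : α < p := by have := hp.pos; omega
  have hβp : β < p := by have := hp.pos; omega
  obtain ⟨c, hc⟩ := hp.dvd_choose_add hαp hβp hab
  have hterm : ∀ k, (-1 : ℚ)^k * gbinom α k * gbinom β k * gbinom (-1 - α - β) k
      = (α.choose k * β.choose k * (α + β + k).choose k : ℕ) := by
    intro k
    rw [sub_sub, ← cast_add, gbinom_natCast, gbinom_natCast, gbinom_neg_one_sub_natCast]
    have hsign : (-1 : ℚ) ^ k * (-1) ^ k = 1 := by rw [← mul_pow]; norm_num
    push_cast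
    linear_combination (α.choose k * β.choose k * (α + β + k).choose k : ℚ) * hsign
  refine ⟨c ^ 2, ?_⟩
  rw [sum_congr rfl fun k _ => hterm k, ← cast_sum,
    eventually_constant_sum (fun k hk => by rw [choose_eq_zero_of_lt hk, zero_mul, zero_mul])
      hαp, sum_range_choose_mul_choose_mul_add_choose, hc]
  push_cast
  ring

/-- For an odd prime `p` and integers `0 ≤ α, β ≤ p-1` with `α + β ≥ p`,
`∑_{k=0}^{p-1} (-1)^k C(α,k) C(β,k) C(-1-α-β,k) ≡ 0 (mod p²)`. -/
theorem alt_triple_binom_sum_div (p : ℕ) (hp : p.Prime) (hodd : Odd p)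
    (α β : ℕ) (hα : α ≤ p - 1) (hβ : β ≤ p - 1) (hab : p ≤ α + β) :
    ∃ m : ℤ, ∑ k ∈ Finset.range p,
        (-1 : ℚ)^k * gbinom (α : ℚ) k * gbinom (β : ℚ) k * gbinom (-1 - α - β) k
      = (p : ℚ)^2 * m :=
  alt_triple_binom_sum_div_general p hp α β hα hβ hab
end

section
/- The Pfaff–Saalschütz identity: for a nonnegative integer n and parameters a, b, d, e (avoiding poles) with d + e = a + b - n + 1, one has ∑_{k=0}^{n} (a)_k (b)_k (-n)_k / ((d)_k (e)_k k!) = (d-a)_n (d-b)_n / ((d)_n (d-a-b)_n). -/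
/-!
Induction on `n`, trading `e` for `e + 1`. Write `T k` for the `k`-th term of the sum with
`c = -(n+1)` and `S k` for that with `c + 1 = -n` and `e + 1`, and put
`κ = (d-a+n)(d-b+n) / ((d+n)(d-a-b+n))`, the ratio of consecutive right-hand sides.
Gosper's certificate `G k = T k · k(d+k-1) / (c(d-c-1))` satisfies `T k - κ S k = G (k+1) - G k`,
a rational identity once `T (k+1) / T k` and `S k / T k` are written out, and
`G (n+1) = -T (n+1)`; so the sums telescope to `∑ T = κ ∑ S`.
-/

/-- Rising factorial (Pochhammer symbol) `(x)_k = x(x+1)⋯(x+k-1)`. -/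
def rise (x : ℚ) (k : ℕ) : ℚ := ∏ i ∈ Finset.range k, (x + i)

open Finset Nat

lemma rise_zero (x : ℚ) : rise x 0 = 1 := rfl

lemma rise_succ (x : ℚ) (k : ℕ) : rise x (k + 1) = rise x k * (x + k) :=
  prod_range_succ _ k

lemma rise_add_one {x : ℚ} (hx : x ≠ 0) (k : ℕ) : rise (x + 1) k = rise x k * (x + k) / x := by
  rw [eq_div_iff hx]
  induction k with
  | zero => simp [rise_zero]
  | succ k ih =>
    rw [rise_succ, rise_succ]
    push_cast
    linear_combination (x + 1 + k) * ih

lemma rise_ne_zero_iff {x : ℚ} {n : ℕ} : rise x n ≠ 0 ↔ ∀ i < n, x + i ≠ 0 := by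
  simp [rise, prod_ne_zero_iff]

/-- The `k`-th term of `₃F₂(a, b, c; d, e; 1)`. -/
def hyperTerm (a b c d e : ℚ) (k : ℕ) : ℚ :=
  rise a k * rise b k * rise c k / (rise d k * rise e k * k !)

lemma hyperTerm_zero (a b c d e : ℚ) : hyperTerm a b c d e 0 = 1 := by
  simp [hyperTerm, rise_zero]

/- Holds without hypotheses: a vanishing `d + k` or `e + k` makes both sides `0`, as `x / 0 = 0`. -/
lemma hyperTerm_succ (a b c d e : ℚ) (k : ℕ) :
    hyperTerm a b c d e (k + 1) =
      hyperTerm a b c d e k * ((a + k) * (b + k) * (c + k) / ((d + k) * (e + k) * (k + 1))) := by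
  simp only [hyperTerm, rise_succ, factorial_succ, cast_mul, cast_succ, div_eq_mul_inv, mul_inv]
  ring

lemma hyperTerm_add_one_add_one (a b d : ℚ) {c e : ℚ} (hc : c ≠ 0) (he : e ≠ 0) (k : ℕ) :
    hyperTerm a b (c + 1) d (e + 1) k = hyperTerm a b c d e k * ((c + k) * e / (c * (e + k))) := by
  simp only [hyperTerm, rise_add_one hc, rise_add_one he, div_eq_mul_inv, mul_inv, inv_inv]
  ring

def wzPartner (a b c d e : ℚ) (k : ℕ) : ℚ :=
  hyperTerm a b c d e k * (k * (d + k - 1) / (c * (d - c - 1)))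

lemma saalschutz_ratio_identity {a b c d e k : ℚ} (h : d + e = a + b + c + 1) (hc : c ≠ 0)
    (hdk : d + k ≠ 0) (hek : e + k ≠ 0) (hk : k + 1 ≠ 0) (hdc : d - c - 1 ≠ 0)
    (hdabc : d - a - b - c - 1 ≠ 0) :
    1 - (d - a - c - 1) * (d - b - c - 1) / ((d - c - 1) * (d - a - b - c - 1)) *
        ((c + k) * e / (c * (e + k)))
      = (a + k) * (b + k) * (c + k) / ((d + k) * (e + k) * (k + 1)) *
          ((k + 1) * (d + k) / (c * (d - c - 1)))
        - k * (d + k - 1) / (c * (d - c - 1)) := by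
  obtain rfl : e = a + b + c + 1 - d := by linear_combination h
  field_simp
  ring

lemma hyperTerm_sub_eq_wzPartner_sub {a b c d e : ℚ} (h : d + e = a + b + c + 1) (hc : c ≠ 0)
    (he : e ≠ 0) (hdc : d - c - 1 ≠ 0) (hdabc : d - a - b - c - 1 ≠ 0) {k : ℕ}
    (hdk : d + k ≠ 0) (hek : e + k ≠ 0) :
    hyperTerm a b c d e k - (d - a - c - 1) * (d - b - c - 1) / ((d - c - 1) * (d - a - b - c - 1)) *
        hyperTerm a b (c + 1) d (e + 1) k
      = wzPartner a b c d e (k + 1) - wzPartner a b c d e k := by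
  have hk : (k : ℚ) + 1 ≠ 0 := by positivity
  have key := saalschutz_ratio_identity h hc hdk hek hk hdc hdabc
  simp only [wzPartner, hyperTerm_succ, hyperTerm_add_one_add_one a b d hc he]
  push_cast
  linear_combination hyperTerm a b c d e k * key

lemma sum_hyperTerm_neg_succ_eq_mul_sum {n : ℕ} {a b d e : ℚ} (h : d + e = a + b - n)
    (hd : ∀ i < n + 1, d + i ≠ 0) (he : ∀ i < n + 1, e + i ≠ 0) (hdab : d - a - b + n ≠ 0) :
    ∑ k ∈ range (n + 1 + 1), hyperTerm a b (-(n + 1)) d e k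
      = (d - a + n) * (d - b + n) / ((d + n) * (d - a - b + n)) *
          ∑ k ∈ range (n + 1), hyperTerm a b (-n) d (e + 1) k := by
  set G := wzPartner a b (-(n + 1)) d e
  have hdn : d + n ≠ 0 := hd n n.lt_succ_self
  have hc : -((n : ℚ) + 1) ≠ 0 := neg_ne_zero.2 (by positivity)
  have he0 : e ≠ 0 := by simpa using he 0 n.succ_pos
  have hκ : (d - a + n) * (d - b + n) / ((d + n) * (d - a - b + n)) =
      (d - a - -(n + 1) - 1) * (d - b - -(n + 1) - 1) /
        ((d - -(n + 1) - 1) * (d - a - b - -(n + 1) - 1)) := by ring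
  have step : ∀ k ∈ range (n + 1), hyperTerm a b (-(n + 1)) d e k
      - (d - a + n) * (d - b + n) / ((d + n) * (d - a - b + n)) * hyperTerm a b (-n) d (e + 1) k
      = G (k + 1) - G k := by
    intro k hk
    rw [hκ, show -(n : ℚ) = -(n + 1) + 1 by ring]
    exact hyperTerm_sub_eq_wzPartner_sub (by linear_combination h) hc he0
      (by convert hdn using 1; ring) (by convert hdab using 1; ring)
      (hd k (mem_range.1 hk)) (he k (mem_range.1 hk))
  have hG0 : G 0 = 0 := by simp [G, wzPartner]
  have hGlast : G (n + 1) = -hyperTerm a b (-(n + 1)) d e (n + 1) := by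
    have hratio :
        ((n + 1 : ℕ) : ℚ) * (d + (n + 1 : ℕ) - 1) / (-(n + 1) * (d - -(n + 1) - 1)) = -1 := by
      rw [div_eq_iff (by convert mul_ne_zero hc hdn using 1; ring)]
      push_cast
      ring
    simp only [G]
    rw [wzPartner, hratio, mul_neg_one]
  rw [sum_range_succ, mul_sum, ← sub_eq_zero, add_sub_right_comm, ← sum_sub_distrib,
    sum_congr rfl step, sum_range_sub, hG0, hGlast]
  ring

theorem sum_range_hyperTerm_neg (n : ℕ) {a b d e : ℚ} (h : d + e = a + b - n + 1)
    (hd : ∀ i < n, d + i ≠ 0) (he : ∀ i < n, e + i ≠ 0) (hdab : ∀ i < n, d - a - b + i ≠ 0) :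
    ∑ k ∈ range (n + 1), hyperTerm a b (-n) d e k
      = rise (d - a) n * rise (d - b) n / (rise d n * rise (d - a - b) n) := by
  induction n generalizing e with
  | zero => simp [hyperTerm_zero, rise_zero]
  | succ n ih =>
    push_cast at h hd he hdab ⊢
    have he' : ∀ i < n, e + 1 + i ≠ 0 := fun i hi => by
      convert he (i + 1) (by omega) using 1
      push_cast
      ring
    rw [sum_hyperTerm_neg_succ_eq_mul_sum (by linear_combination h) hd he (hdab n n.lt_succ_self),
      ih (by linear_combination h) (fun i hi => hd i (by omega)) he' (fun i hi => hdab i (by omega))]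
    simp only [rise_succ, div_eq_mul_inv, mul_inv]
    ring

/-- The Pfaff–Saalschütz identity: if `d + e = a + b - n + 1` and no denominator
vanishes, then `∑_{k=0}^{n} (a)_k (b)_k (-n)_k / ((d)_k (e)_k k!) =
(d-a)_n (d-b)_n / ((d)_n (d-a-b)_n)`. -/
theorem pfaff_saalschutz (n : ℕ) (a b d e : ℚ)
    (h : d + e = a + b - n + 1)
    (hd : ∀ k ≤ n, rise d k ≠ 0) (he : ∀ k ≤ n, rise e k ≠ 0)
    (hdab : rise (d - a - b) n ≠ 0) :
    ∑ k ∈ Finset.range (n + 1),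
        rise a k * rise b k * rise (-(n : ℚ)) k / (rise d k * rise e k * (Nat.factorial k))
      = rise (d - a) n * rise (d - b) n / (rise d n * rise (d - a - b) n) :=
  sum_range_hyperTerm_neg n h (rise_ne_zero_iff.1 (hd n le_rfl)) (rise_ne_zero_iff.1 (he n le_rfl))
    (rise_ne_zero_iff.1 hdab)
end

section
/- For an odd prime p, any integer s, any integer α, and any integer k with 0 ≤ k ≤ p-1, the binomial coefficient C(α + s·p, k) is congruent to C(α, k) + s·p · ∑_{j=1}^{k} C(α, k-j) · (-1)^{j-1} / j modulo p^2, where each term C(α,k-j)·(-1)^{j-1}/j is interpreted modulo p (since p·(1/j mod p) is well-defined mod p^2). -/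
open Finset

theorem Ring.factorial_mul_choose_int_eq_prod (n : ℤ) (k : ℕ) :
    (k.factorial : ℤ) * Ring.choose n k = ∏ i ∈ range k, (n - i) := by
  rw [← nsmul_eq_mul, ← Ring.descPochhammer_eq_factorial_smul_choose,
    ← Polynomial.eval_eq_smeval, descPochhammer_eval_eq_prod_range]

theorem gbinom_intCast (n : ℤ) (k : ℕ) : gbinom n k = (Ring.choose n k : ℤ) := by
  rw [gbinom, div_eq_iff (by positivity), mul_comm]
  exact_mod_cast (Ring.factorial_mul_choose_int_eq_prod n k).symm

theorem Ring.choose_neg_one {R : Type*} [Ring R] [BinomialRing R] [NatPowAssoc R] (n : ℕ) :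
    Ring.choose (-1 : R) n = (-1) ^ n := by
  rw [Ring.choose_neg, add_sub_cancel_left, Ring.choose_natCast, Nat.choose_self, Nat.cast_one]
  simp [Units.smul_def]

theorem Ring.succ_mul_choose_eq {R : Type*} [NonAssocRing R] [Pow R ℕ] [NatPowAssoc R]
    [BinomialRing R] (r : R) (n : ℕ) :
    ((n + 1 : ℕ) : R) * Ring.choose r (n + 1) = r * Ring.choose (r - 1) n := by
  simpa [nsmul_eq_mul, Ring.choose_one_right] using Ring.choose_smul_choose r (Nat.le_add_left 1 n)

theorem Ring.choose_add_eq_add_sum_Icc {R : Type*} [CommRing R] [BinomialRing R] (r s : R)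
    (k : ℕ) : Ring.choose (r + s) k =
      Ring.choose r k + ∑ j ∈ Icc 1 k, Ring.choose r (k - j) * Ring.choose s j := by
  have hrange : range (k + 1) = insert 0 (Icc 1 k) := by ext; simp; omega
  rw [add_comm, Ring.add_choose_eq k (Commute.all s r), Nat.sum_antidiagonal_eq_sum_range_succ_mk,
    hrange, sum_insert (by simp)]
  simp only [Ring.choose_zero_right, Nat.sub_zero, one_mul, mul_comm (Ring.choose s _)]

theorem Int.ModEq.cancel_left_of_isCoprime {m c a b : ℤ} (hmc : IsCoprime m c)
    (h : c * a ≡ c * b [ZMOD m]) : a ≡ b [ZMOD m] :=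
  Int.modEq_iff_dvd.2 (hmc.dvd_of_dvd_mul_left (by simpa [mul_sub] using Int.modEq_iff_dvd.1 h))

theorem Int.ModEq.mul_left_sq {m a b : ℤ} (c : ℤ) (h : a ≡ b [ZMOD m]) :
    c * m * a ≡ c * m * b [ZMOD m ^ 2] := by
  have h' := h.mul_left' (c := c * m)
  rw [mul_assoc c m m, ← sq] at h'
  exact h'.of_mul_left c

theorem Ring.choose_modEq_of_lt_prime {p n : ℕ} (hp : p.Prime) (hn : n < p) {x y : ℤ}
    (h : x ≡ y [ZMOD p]) : Ring.choose x n ≡ Ring.choose y n [ZMOD p] := by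
  have hcop : IsCoprime (p : ℤ) n.factorial :=
    Nat.isCoprime_iff_coprime.2 ((hp.coprime_iff_not_dvd).2 (mt hp.dvd_factorial.1 (by omega)))
  refine Int.ModEq.cancel_left_of_isCoprime hcop ?_
  rw [Ring.factorial_mul_choose_int_eq_prod, Ring.factorial_mul_choose_int_eq_prod]
  exact Int.ModEq.prod fun i _ => h.sub_right _

theorem Ring.choose_mul_prime_modEq {p j : ℕ} (hp : p.Prime) (hj : 0 < j) (hjp : j < p)
    (s w : ℤ) (hw : j * w ≡ 1 [ZMOD p]) :
    Ring.choose (s * p) j ≡ s * p * (-1) ^ (j - 1) * w [ZMOD p ^ 2] := by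
  obtain ⟨i, rfl⟩ : ∃ i, j = i + 1 := ⟨j - 1, by omega⟩
  have hcop : IsCoprime ((p : ℤ) ^ 2) ((i + 1 : ℕ) : ℤ) :=
    (Nat.isCoprime_iff_coprime.2
      (hp.coprime_iff_not_dvd.2 (Nat.not_dvd_of_pos_of_lt hj hjp))).pow_left
  have hpred : Ring.choose (s * p - 1) i ≡ (-1) ^ i [ZMOD p] := by
    rw [← Ring.choose_neg_one]
    exact Ring.choose_modEq_of_lt_prime hp (by omega)
      ((Int.modEq_zero_iff_dvd.2 (dvd_mul_left _ s)).sub_right 1)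
  refine Int.ModEq.cancel_left_of_isCoprime hcop ?_
  calc ((i + 1 : ℕ) : ℤ) * Ring.choose (s * p) (i + 1) = s * p * Ring.choose (s * p - 1) i :=
        Ring.succ_mul_choose_eq _ _
    _ ≡ s * p * (-1) ^ i [ZMOD p ^ 2] := hpred.mul_left_sq s
    _ = s * (-1) ^ i * p * 1 := by ring
    _ ≡ s * (-1) ^ i * p * ((i + 1 : ℕ) * w) [ZMOD p ^ 2] := hw.symm.mul_left_sq _
    _ = ((i + 1 : ℕ) : ℤ) * (s * p * (-1) ^ (i + 1 - 1) * w) := by rw [Nat.add_sub_cancel]; push_cast; ring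

theorem binom_shift_mod_p_sq_general (p : ℕ) (hp : p.Prime)
    (s α : ℤ) (k : ℕ) (hk : k ≤ p - 1)
    (inv : ℕ → ℤ) (hinv : ∀ j, 1 ≤ j → j ≤ k → (j : ℤ) * inv j ≡ 1 [ZMOD (p : ℤ)]) :
    ∃ m : ℤ, gbinom ((α : ℚ) + s * p) k
      = gbinom (α : ℚ) k
        + s * p * (∑ j ∈ Finset.Icc 1 k, gbinom (α : ℚ) (k - j) * (-1)^(j-1) * (inv j : ℚ))
        + (p : ℚ)^2 * m := by
  have hcongr : Ring.choose (α + s * p) k ≡ Ring.choose α k +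
      s * p * ∑ j ∈ Icc 1 k, Ring.choose α (k - j) * (-1) ^ (j - 1) * inv j [ZMOD p ^ 2] := by
    rw [Ring.choose_add_eq_add_sum_Icc, mul_sum]
    refine Int.ModEq.add_left _ (Int.ModEq.sum fun j hj => ?_)
    obtain ⟨hj1, hjk⟩ := mem_Icc.1 hj
    calc Ring.choose α (k - j) * Ring.choose (s * p) j
        ≡ Ring.choose α (k - j) * (s * p * (-1) ^ (j - 1) * inv j) [ZMOD p ^ 2] :=
          (Ring.choose_mul_prime_modEq hp hj1 (by omega) s (inv j) (hinv j hj1 hjk)).mul_left _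
      _ = s * p * (Ring.choose α (k - j) * (-1) ^ (j - 1) * inv j) := by ring
  obtain ⟨m, hm⟩ := Int.modEq_iff_dvd.1 hcongr.symm
  refine ⟨m, ?_⟩
  have hcast := congrArg (Int.cast : ℤ → ℚ) hm
  rw [show (α : ℚ) + s * p = ((α + s * p : ℤ) : ℚ) by push_cast; ring, gbinom_intCast]
  push_cast [gbinom_intCast] at hcast ⊢
  linear_combination hcast

/-- For an odd prime `p`, integers `s, α` and `0 ≤ k ≤ p-1`,
`C(α+sp,k) ≡ C(α,k) + sp ∑_{j=1}^{k} C(α,k-j)(-1)^{j-1}/j  (mod p²)`,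
where `inv j` is any integer inverse of `j` modulo `p`. -/
theorem binom_shift_mod_p_sq (p : ℕ) (hp : p.Prime) (hodd : Odd p)
    (s α : ℤ) (k : ℕ) (hk : k ≤ p - 1)
    (inv : ℕ → ℤ) (hinv : ∀ j, 1 ≤ j → j ≤ k → (j : ℤ) * inv j ≡ 1 [ZMOD (p : ℤ)]) :
    ∃ m : ℤ, gbinom ((α : ℚ) + s * p) k
      = gbinom (α : ℚ) k
        + s * p * (∑ j ∈ Finset.Icc 1 k, gbinom (α : ℚ) (k - j) * (-1)^(j-1) * (inv j : ℚ))
        + (p : ℚ)^2 * m :=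
  binom_shift_mod_p_sq_general p hp s α k hk inv hinv
end

section
/- For every positive integer α, ∑_{j=0}^{α-1} (1/(j+1)) · C(-α-1, j) · C(α-1, j) = -(1/α) · C(-1, α) = (-1)^{α+1}/α. -/
lemma desc_smeval (x : ℚ) (k : ℕ) :
    (descPochhammer ℤ k).smeval x = ∏ i ∈ Finset.range k, (x - i) := by
  induction k with
  | zero => simp [descPochhammer_zero, Polynomial.smeval_one]
  | succ n ih =>
    rw [descPochhammer_succ_right, Polynomial.smeval_mul, ih, Finset.prod_range_succ]
    congr 1
    simp [Polynomial.smeval_sub, Polynomial.smeval_X, Polynomial.smeval_natCast]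

lemma gbinom_eq_choose (x : ℚ) (k : ℕ) : gbinom x k = Ring.choose x k := by
  have h := Ring.descPochhammer_eq_factorial_smul_choose x k
  rw [desc_smeval, nsmul_eq_mul] at h
  rw [gbinom, h]
  field_simp [Nat.factorial_ne_zero]

lemma gbinom_neg_one (k : ℕ) : gbinom (-1 : ℚ) k = (-1)^k := by
  rw [gbinom]
  have h : ∏ i ∈ Finset.range k, ((-1 : ℚ) - i) = (-1)^k * (Nat.factorial k : ℚ) := by
    induction k with
    | zero => simp
    | succ n ih =>
      rw [Finset.prod_range_succ, ih, Nat.factorial_succ]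
      push_cast; ring
  rw [h, mul_div_assoc, div_self (by exact_mod_cast Nat.factorial_ne_zero k), mul_one]

lemma absorb (a : ℚ) (ha : a ≠ 0) (j : ℕ) :
    (1/((j:ℚ)+1)) * gbinom (-a - 1) j = -(1/a) * gbinom (-a) (j+1) := by
  have h1 : ∏ i ∈ Finset.range (j+1), (-a - (i:ℚ)) =
      (∏ i ∈ Finset.range j, (-a - 1 - (i:ℚ))) * (-a) := by
    rw [Finset.prod_range_succ']
    congr 1
    · exact Finset.prod_congr rfl fun i _ => by push_cast; ring
    · simp
  rw [gbinom, gbinom, h1, Nat.factorial_succ]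
  have hj : ((j:ℚ)+1) ≠ 0 := by positivity
  have hf : ((Nat.factorial j : ℚ)) ≠ 0 := by exact_mod_cast Nat.factorial_ne_zero j
  push_cast
  field_simp

/-- Base case `β = 1` of Lemma 1:
`∑_{j=0}^{α-1} C(-α-1,j) C(α-1,j)/(j+1) = -(1/α) C(-1,α) = (-1)^{α+1}/α`. -/
theorem lemma_base (α : ℕ) (hα : 1 ≤ α) :
    (∑ j ∈ Finset.range α,
        (1 / ((j : ℚ) + 1)) * gbinom (-(α : ℚ) - 1) j * gbinom ((α : ℚ) - 1) j
      = -(1 / (α : ℚ)) * gbinom (-1 : ℚ) α) ∧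
    (∑ j ∈ Finset.range α,
        (1 / ((j : ℚ) + 1)) * gbinom (-(α : ℚ) - 1) j * gbinom ((α : ℚ) - 1) j
      = (-1 : ℚ)^(α + 1) / α) := by
  have haQ : (α : ℚ) ≠ 0 := by positivity
  have key : ∑ j ∈ Finset.range α,
      (1 / ((j : ℚ) + 1)) * gbinom (-(α : ℚ) - 1) j * gbinom ((α : ℚ) - 1) j
      = -(1 / (α : ℚ)) * gbinom (-1 : ℚ) α := by
    -- apply absorption
    have step1 : ∀ j ∈ Finset.range α,
        (1 / ((j : ℚ) + 1)) * gbinom (-(α : ℚ) - 1) j * gbinom ((α : ℚ) - 1) j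
        = -(1/(α:ℚ)) * (gbinom (-(α:ℚ)) (j+1) * gbinom ((α:ℚ) - 1) (α - (j+1))) := by
      intro j hj
      rw [Finset.mem_range] at hj
      have hsym : gbinom ((α:ℚ) - 1) j = gbinom ((α:ℚ) - 1) (α - (j+1)) := by
        have hc : ((α:ℚ) - 1) = ((α - 1 : ℕ) : ℚ) := by
          push_cast [hα]; ring
        rw [hc, gbinom_eq_choose, gbinom_eq_choose, Ring.choose_natCast, Ring.choose_natCast]
        have : α - (j+1) = (α - 1) - j := by omega
        rw [this, Nat.choose_symm (by omega)]
      rw [absorb (α:ℚ) haQ j, hsym]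
      ring
    rw [Finset.sum_congr rfl step1, ← Finset.mul_sum]
    congr 1
    -- Vandermonde
    have hvdm := Ring.add_choose_eq (R := ℚ) (r := -(α:ℚ)) (s := (α:ℚ) - 1) α (Commute.all _ _)
    have hadd : (-(α:ℚ)) + ((α:ℚ) - 1) = -1 := by ring
    rw [hadd] at hvdm
    rw [gbinom_eq_choose, hvdm, Finset.Nat.sum_antidiagonal_eq_sum_range_succ_mk,
      Finset.sum_range_succ' _ α]
    have h0 : Ring.choose (-(α:ℚ)) 0 * Ring.choose ((α:ℚ) - 1) (α - 0) = 0 := by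
      rw [← gbinom_eq_choose, ← gbinom_eq_choose]
      have : gbinom ((α:ℚ) - 1) (α - 0) = 0 := by
        rw [gbinom]
        rw [Finset.prod_eq_zero (Finset.mem_range.mpr (show α - 1 < α - 0 by omega))]
        · simp
        · push_cast [hα]; ring
      rw [this, mul_zero]
    rw [h0, add_zero]
    exact Finset.sum_congr rfl fun j _ => by
      rw [← gbinom_eq_choose, ← gbinom_eq_choose]
  refine ⟨key, ?_⟩
  rw [key, gbinom_neg_one, pow_succ]
  field_simp
end

section
/- For integers α > β > 1 and 0 ≤ j, the rational function identity (1/(j+1+α-β)) · C(-α-1, j) · C(β-1, j) = ((α+β-1)/α²) · C(-α, j) · C(β-1, j) + ((β-1)²/α²) · (1/(j+1+α-β)) · C(-α, j) · C(β-2, j) holds. -/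
lemma gbinom_shift (x : ℚ) (j : ℕ) :
    gbinom (x - 1) j * x = gbinom x j * (x - j) := by
  unfold gbinom
  have h : (∏ i ∈ Finset.range j, (x - 1 - i)) * x
      = (∏ i ∈ Finset.range j, (x - i)) * (x - j) := by
    have h1 := Finset.prod_range_succ (fun i => x - i) j
    have h2 := Finset.prod_range_succ' (fun i => x - i) j
    have : (∏ i ∈ Finset.range j, (x - 1 - i)) = ∏ i ∈ Finset.range j, (x - (i + 1 : ℕ)) := by
      apply Finset.prod_congr rfl
      intro i _
      push_cast
      ring
    rw [this]
    calc (∏ i ∈ Finset.range j, (x - ((i : ℕ) + 1 : ℕ))) * x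
        = ∏ i ∈ Finset.range (j + 1), (x - i) := by
          rw [h2]; simp
      _ = (∏ i ∈ Finset.range j, (x - i)) * (x - j) := h1
  rw [div_mul_eq_mul_div, div_mul_eq_mul_div, h]

/-- Contiguity relation used in the inductive step of Lemma 1: for integers
`α > β > 1` and `j ≥ 0`,
`C(-α-1,j)C(β-1,j)/(j+1+α-β) = ((α+β-1)/α²) C(-α,j)C(β-1,j)
  + ((β-1)²/α²) C(-α,j)C(β-2,j)/(j+1+α-β)`. -/
theorem contiguity (α β : ℤ) (hβ : 1 < β) (hαβ : β < α) (j : ℕ) :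
    (1 / ((j : ℚ) + 1 + α - β)) * gbinom (-(α : ℚ) - 1) j * gbinom ((β : ℚ) - 1) j
      = (((α : ℚ) + β - 1) / (α : ℚ)^2) * gbinom (-(α : ℚ)) j * gbinom ((β : ℚ) - 1) j
        + (((β : ℚ) - 1)^2 / (α : ℚ)^2) * (1 / ((j : ℚ) + 1 + α - β))
          * gbinom (-(α : ℚ)) j * gbinom ((β : ℚ) - 2) j := by
  have hapos : (0 : ℚ) < (α : ℚ) := by exact_mod_cast (by omega : (0:ℤ) < α)
  have ha : (α : ℚ) ≠ 0 := ne_of_gt hapos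
  have hb : (β : ℚ) - 1 ≠ 0 := by
    have : (1 : ℚ) < (β : ℚ) := by exact_mod_cast hβ
    linarith
  have hab : (1 : ℚ) ≤ (α : ℚ) - β := by
    have : (1 : ℤ) ≤ α - β := by omega
    exact_mod_cast this
  have hD : ((j : ℚ) + 1 + α - β) ≠ 0 := by
    have hj : (0 : ℚ) ≤ (j : ℚ) := Nat.cast_nonneg j
    intro h
    linarith
  have h1 := gbinom_shift (-(α : ℚ)) j
  have h2' := gbinom_shift ((β : ℚ) - 1) j
  have h2 : gbinom ((β : ℚ) - 2) j * ((β : ℚ) - 1)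
      = gbinom ((β : ℚ) - 1) j * ((β : ℚ) - 1 - j) := by
    rw [show (β : ℚ) - 2 = ((β : ℚ) - 1) - 1 by ring]
    exact h2'
  have hA1 : gbinom (-(α : ℚ) - 1) j
      = gbinom (-(α : ℚ)) j * ((α : ℚ) + j) / α := by
    field_simp
    linear_combination -h1
  have hC2 : gbinom ((β : ℚ) - 2) j
      = gbinom ((β : ℚ) - 1) j * ((β : ℚ) - 1 - j) / ((β : ℚ) - 1) := by
    field_simp
    linear_combination h2
  rw [hA1, hC2]
  field_simp
  ring
end

section
/- For a prime p ≥ 5 and a p-integral rational α with {α}_p ≥ 1, the truncated hypergeometric sum ∑_{k=0}^{p-1} (α)_k (1-α)_k / (k!)^2 ≡ (-1)^{{α}_p - 1} (mod p^2). -/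
/-!
Put `p = m + 1` and `G(r) = (m!)² ∑_{k ≤ m} (r)_k (1-r)_k / (k!)²`. Telescoping the contiguous
relation of `(r)_k (1-r)_k` gives the three-term recurrence
`r (G(r+1) + G(r)) + (r-1) (G(r) + G(r-1)) = 2 (2r-1) (r)_m (1-r)_m`.
Reduce modulo `p²`: there `α = a + τ` with `p ∣ τ`, so `τ² = pτ = 0`. At `τ` and at `1 + τ` the
value of `G` is `(m!)² ± τ (m!)² H_m`, and `p ∣ H_m`, so both equal `(m!)²`. For `2 ≤ j < m` the
right-hand side vanishes at `j + τ`, as `(r)_m (1-r)_m` then contains the factor `(p + τ)(-τ)`;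
at `j = 1` it cancels against the values at `τ` and `1 + τ`. Hence
`(j + τ) (G(j+1+τ) + G(j+τ)) = 0`, and since `j + τ` is a unit, `G` alternates in sign along
`1 + τ, …, m + τ`.
-/

open Finset
open scoped Nat

lemma Nat.factorial_div_factorial_eq_succ_mul {n m : ℕ} (h : n < m) :
    m ! / n ! = (n + 1) * (m ! / (n + 1)!) := by
  refine Nat.div_eq_of_eq_mul_right n.factorial_pos ?_
  rw [← mul_assoc, mul_comm n !, ← Nat.factorial_succ,
    Nat.mul_div_cancel' (Nat.factorial_dvd_factorial h)]

section CommRing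

variable {R S : Type*} [CommRing R] [CommRing S]

def risePair (k : ℕ) (r : R) : R := ∏ i ∈ range k, (r + i) * (1 - r + i)

@[simp]
lemma risePair_zero (r : R) : risePair 0 r = 1 := by simp [risePair]

lemma risePair_succ (k : ℕ) (r : R) :
    risePair (k + 1) r = risePair k r * ((r + k) * (1 - r + k)) :=
  prod_range_succ _ _

lemma map_risePair (f : R →+* S) (k : ℕ) (r : R) : f (risePair k r) = risePair k (f r) := by
  simp [risePair, map_prod]

lemma risePair_one_sub (k : ℕ) (r : R) : risePair k (1 - r) = risePair k r := by
  simp only [risePair, sub_sub_cancel]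
  exact prod_congr rfl fun _ _ => mul_comm _ _

lemma sub_mul_risePair_add_one (k : ℕ) (r : R) :
    ((k : R) - r) * risePair k (r + 1) = -(r + k) * risePair k r := by
  induction k with
  | zero => simp
  | succ k ih =>
    simp only [risePair_succ, Nat.cast_succ]
    linear_combination ((k + 1 - r) * (r + 1 + k)) * ih

lemma add_sub_one_mul_risePair_sub_one (k : ℕ) (r : R) :
    (r + k - 1) * risePair k (r - 1) = -(k + 1 - r) * risePair k r := by
  have h := sub_mul_risePair_add_one k (1 - r)
  rw [show 1 - r + 1 = 1 - (r - 1) by ring, risePair_one_sub, risePair_one_sub] at h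
  linear_combination h

lemma risePair_succ_three_term (k : ℕ) (r : R) :
    r * risePair (k + 1) (r + 1) - (2 * r - 1) * risePair (k + 1) r
        + (r - 1) * risePair (k + 1) (r - 1)
      = -(2 * (2 * r - 1) * ((k : R) + 1) ^ 2) * risePair k r := by
  simp only [risePair_succ]
  linear_combination (r * (r + 1 + k)) * sub_mul_risePair_add_one k r
    + ((r - 1) * (k + 2 - r)) * add_sub_one_mul_risePair_sub_one k r

lemma risePair_succ_of_mul_self_eq_zero {τ : R} (hτ : τ * τ = 0) (k : ℕ) :
    risePair (k + 1) τ = τ * (k ! * (k + 1)! : ℕ) := by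
  induction k with
  | zero =>
    simp only [risePair_succ, risePair_zero]
    push_cast
    linear_combination -hτ
  | succ k ih =>
    rw [risePair_succ, ih]
    push_cast [Nat.factorial_succ]
    linear_combination ((k + 1) * (k ! : R) ^ 2 * (1 - τ)) * hτ

lemma risePair_succ_one_add_of_mul_self_eq_zero {τ : R} (hτ : τ * τ = 0) (k : ℕ) :
    risePair (k + 1) (1 + τ) = -(τ * (k ! * (k + 1)! : ℕ)) := by
  rw [← sub_neg_eq_add, risePair_one_sub,
    risePair_succ_of_mul_self_eq_zero (by linear_combination hτ), neg_mul]

lemma risePair_natCast_add_eq_zero {m j : ℕ} {τ : R} (hτ : τ * τ = 0)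
    (hpτ : ((m + 1 : ℕ) : R) * τ = 0) (h2j : 2 ≤ j) (hjm : j < m) :
    risePair m ((j : R) + τ) = 0 := by
  have hdvd := mul_dvd_mul
    (dvd_prod_of_mem (fun i : ℕ => (j + τ) + (i : R)) (mem_range.mpr (by omega : m + 1 - j < m)))
    (dvd_prod_of_mem (fun i : ℕ => 1 - (j + τ) + (i : R)) (mem_range.mpr (by omega : j - 1 < m)))
  rw [← prod_mul_distrib, Nat.cast_sub (by omega), Nat.cast_sub (by omega)] at hdvd
  refine zero_dvd_iff.mp (dvd_trans (zero_dvd_iff.mpr ?_) hdvd)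
  linear_combination -hpτ - hτ

-- `(m!)² ∑_{k ≤ m} (r)_k (1-r)_k / (k!)²`, with the denominators cleared so that it makes sense
-- in any commutative ring.
def clearedSum (m : ℕ) (r : R) : R :=
  ∑ k ∈ range (m + 1), ((m ! / k ! : ℕ) : R) ^ 2 * risePair k r

lemma map_clearedSum (f : R →+* S) (m : ℕ) (r : R) : f (clearedSum m r) = clearedSum m (f r) := by
  simp [clearedSum, map_risePair]

lemma clearedSum_one_sub (m : ℕ) (r : R) : clearedSum m (1 - r) = clearedSum m r := by
  simp [clearedSum, risePair_one_sub]

lemma clearedSum_three_term (m : ℕ) (r : R) :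
    r * (clearedSum m (r + 1) + clearedSum m r)
        + (r - 1) * (clearedSum m r + clearedSum m (r - 1))
      = 2 * (2 * r - 1) * risePair m r := by
  set w : ℕ → R := fun k => ((m ! / k ! : ℕ) : R) ^ 2
  set t : ℕ → R := fun k =>
    r * risePair k (r + 1) + (2 * r - 1) * risePair k r + (r - 1) * risePair k (r - 1)
  have partial_sum : ∀ n ≤ m,
      ∑ k ∈ range (n + 1), w k * t k = 2 * (2 * r - 1) * (w n * risePair n r) := by
    intro n hn
    induction n with
    | zero => simp only [t, zero_add, sum_range_one, risePair_zero]; ring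
    | succ n ih =>
      have hw : w n = ((n : R) + 1) ^ 2 * w (n + 1) := by
        simp only [w, Nat.factorial_div_factorial_eq_succ_mul (show n < m by omega)]
        push_cast; ring
      rw [sum_range_succ, ih (by omega), hw]
      linear_combination w (n + 1) * risePair_succ_three_term n r
  have h := partial_sum m le_rfl
  simp only [w, t, Nat.div_self m.factorial_pos, Nat.cast_one, one_pow, one_mul] at h
  rw [← h]
  simp only [clearedSum, mul_add, mul_sum, ← sum_add_distrib]
  exact sum_congr rfl fun k _ => by ring

lemma clearedSum_of_mul_self_eq_zero {τ : R} (hτ : τ * τ = 0) (m : ℕ) :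
    clearedSum m τ
      = (m ! : R) ^ 2 + τ * ((∑ k ∈ range m, (m ! / (k + 1)!) ^ 2 * (k ! * (k + 1)!) : ℕ) : R) := by
  rw [clearedSum, sum_range_succ', add_comm]
  simp only [risePair_succ_of_mul_self_eq_zero hτ, risePair_zero, Nat.factorial_zero,
    Nat.div_one, mul_one]
  push_cast
  rw [mul_sum]
  exact congrArg _ (sum_congr rfl fun k _ => by ring)

end CommRing

lemma ZMod.sum_range_inv_eq_zero {p : ℕ} [Fact p.Prime] (hp2 : p ≠ 2) :
    ∑ k ∈ range p, (k : ZMod p)⁻¹ = 0 := by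
  have hinv : ∑ x : ZMod p, x⁻¹ = ∑ x : ZMod p, x ^ 1 := by
    simp only [pow_one]
    exact Fintype.sum_equiv (Equiv.inv _) _ _ fun _ => rfl
  rw [FiniteField.sum_pow_lt_card_sub_one _ _ (by
    have := (Fact.out : p.Prime).two_le; rw [ZMod.card]; omega)] at hinv
  rw [← hinv]
  refine sum_nbij (fun k : ℕ => (k : ZMod p)) (fun _ _ => mem_univ _) ?_ ?_ fun _ _ => rfl
  · intro a ha b hb hab
    simp only [coe_range, Set.mem_Iio] at ha hb
    simpa [ZMod.natCast_eq_natCast_iff', Nat.mod_eq_of_lt ha, Nat.mod_eq_of_lt hb] using hab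
  · exact fun x _ => ⟨x.val, mem_range.mpr x.val_lt, ZMod.natCast_zmod_val x⟩

-- The sum is `(m!)² H_m`, and the harmonic number `H_{p-1}` vanishes modulo an odd prime `p`.
lemma dvd_sum_factorial_div_sq_mul {m : ℕ} (hp : (m + 1).Prime) (hp2 : m + 1 ≠ 2) :
    m + 1 ∣ ∑ k ∈ range m, (m ! / (k + 1)!) ^ 2 * (k ! * (k + 1)!) := by
  have := Fact.mk hp
  have harmonic := ZMod.sum_range_inv_eq_zero hp2
  rw [sum_range_succ', Nat.cast_zero, inv_zero, add_zero] at harmonic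
  push_cast at harmonic
  rw [← ZMod.natCast_eq_zero_iff]
  have term : ∀ k ∈ range m, (((m ! / (k + 1)!) ^ 2 * (k ! * (k + 1)!) : ℕ) : ZMod (m + 1))
      = (m ! : ZMod (m + 1)) ^ 2 * ((k : ZMod (m + 1)) + 1)⁻¹ := by
    intro k hk
    have hk : k + 1 < m + 1 := by simpa using hk
    have hfac : ((k + 1)! : ZMod (m + 1)) ≠ 0 := by
      rw [Ne, ZMod.natCast_eq_zero_iff, hp.dvd_factorial]; omega
    obtain ⟨hsucc, hk0⟩ : ((k : ZMod (m + 1)) + 1) ≠ 0 ∧ (k ! : ZMod (m + 1)) ≠ 0 := by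
      simpa [Nat.factorial_succ] using hfac
    rw [Nat.cast_mul, Nat.cast_pow,
      Nat.cast_div (Nat.factorial_dvd_factorial (by omega : k + 1 ≤ m)) hfac, Nat.cast_mul,
      Nat.factorial_succ]
    push_cast at hfac ⊢
    field_simp
  rw [Nat.cast_sum, sum_congr rfl term, ← mul_sum, harmonic, mul_zero]

section CongruenceModSq

variable {R : Type*} [CommRing R] {m : ℕ} {τ : R}

lemma clearedSum_eq_factorial_sq (hp : (m + 1).Prime) (hp2 : m + 1 ≠ 2) (hτ : τ * τ = 0)
    (hpτ : ((m + 1 : ℕ) : R) * τ = 0) : clearedSum m τ = (m ! : R) ^ 2 := by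
  obtain ⟨c, hc⟩ := dvd_sum_factorial_div_sq_mul hp hp2
  rw [clearedSum_of_mul_self_eq_zero hτ, hc, Nat.cast_mul]
  linear_combination (c : R) * hpτ

lemma clearedSum_one_add_eq_factorial_sq (hp : (m + 1).Prime) (hp2 : m + 1 ≠ 2)
    (hτ : τ * τ = 0) (hpτ : ((m + 1 : ℕ) : R) * τ = 0) : clearedSum m (1 + τ) = (m ! : R) ^ 2 := by
  rw [← sub_neg_eq_add, clearedSum_one_sub]
  exact clearedSum_eq_factorial_sq hp hp2 (by linear_combination hτ) (by linear_combination -hpτ)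

lemma mul_clearedSum_succ_add_clearedSum_eq_zero (hp : (m + 1).Prime) (hp2 : m + 1 ≠ 2)
    (hτ : τ * τ = 0) (hpτ : ((m + 1 : ℕ) : R) * τ = 0) {j : ℕ} (h1j : 1 ≤ j) (hjm : j < m) :
    ((j : R) + τ) * (clearedSum m (((j + 1 : ℕ) : R) + τ) + clearedSum m ((j : R) + τ)) = 0 := by
  induction j, h1j using Nat.le_induction with
  | base =>
    obtain ⟨n, rfl⟩ : ∃ n, m = n + 1 := ⟨m - 1, by omega⟩
    have h := clearedSum_three_term (n + 1) (1 + τ)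
    rw [add_sub_cancel_left, clearedSum_one_add_eq_factorial_sq hp hp2 hτ hpτ,
      clearedSum_eq_factorial_sq hp hp2 hτ hpτ, risePair_succ_one_add_of_mul_self_eq_zero hτ,
      show 1 + τ + 1 = ((1 + 1 : ℕ) : R) + τ by push_cast; ring] at h
    rw [Nat.cast_one, clearedSum_one_add_eq_factorial_sq hp hp2 hτ hpτ]
    push_cast [Nat.factorial_succ] at h hpτ ⊢
    linear_combination
      h - (2 * (n + 1) * (n ! : R) ^ 2) * hpτ - (4 * (n + 1) * (n ! : R) ^ 2) * hτ
  | succ j h1j ih =>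
    have h := clearedSum_three_term m ((j + 1 : ℕ) + τ)
    rw [risePair_natCast_add_eq_zero hτ hpτ (by omega) hjm,
      show ((j + 1 : ℕ) : R) + τ - 1 = (j : R) + τ by push_cast; ring,
      show ((j + 1 : ℕ) : R) + τ + 1 = ((j + 1 + 1 : ℕ) : R) + τ by push_cast; ring] at h
    linear_combination h - ih (by omega)

end CongruenceModSq

lemma clearedSum_natCast_add_of_dvd {m : ℕ} (hp : (m + 1).Prime) (hp2 : m + 1 ≠ 2)
    {τ : ZMod ((m + 1) ^ 2)} (hτ : ((m + 1 : ℕ) : ZMod ((m + 1) ^ 2)) ∣ τ)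
    {j : ℕ} (h1j : 1 ≤ j) (hjm : j ≤ m) :
    clearedSum m ((j : ZMod ((m + 1) ^ 2)) + τ)
      = (-1) ^ (j - 1) * (m ! : ZMod ((m + 1) ^ 2)) ^ 2 := by
  obtain ⟨t, rfl⟩ := hτ
  set p : ZMod ((m + 1) ^ 2) := ((m + 1 : ℕ) : ZMod ((m + 1) ^ 2))
  have hpp : p * p = 0 := by rw [← Nat.cast_mul, ← sq, ZMod.natCast_self]
  have hτ2 : p * t * (p * t) = 0 := by linear_combination t ^ 2 * hpp
  have hpτ : p * (p * t) = 0 := by linear_combination t * hpp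
  induction j, h1j using Nat.le_induction with
  | base => simpa using clearedSum_one_add_eq_factorial_sq hp hp2 hτ2 hpτ
  | succ j h1j ih =>
    have hj : IsUnit (j : ZMod ((m + 1) ^ 2)) := (ZMod.isUnit_iff_coprime _ _).mpr
      (((hp.coprime_iff_not_dvd).mpr (Nat.not_dvd_of_pos_of_lt h1j (by omega))).symm.pow_right 2)
    have hunit : IsUnit ((j : ZMod ((m + 1) ^ 2)) + p * t) :=
      IsNilpotent.isUnit_add_left_of_commute ⟨2, (sq _).trans hτ2⟩ hj (Commute.all _ _)
    have h := mul_clearedSum_succ_add_clearedSum_eq_zero hp hp2 hτ2 hpτ h1j (by omega)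
    rw [hunit.mul_right_eq_zero, ih (by omega), add_eq_zero_iff_eq_neg] at h
    obtain ⟨k, rfl⟩ : ∃ k, j = k + 1 := ⟨j - 1, by omega⟩
    rw [h, Nat.add_sub_cancel, Nat.add_sub_cancel, pow_succ]
    ring

lemma clearedSum_eq_factorial_sq_mul_sum_rise (m : ℕ) (α : ℚ) :
    clearedSum m α
      = (m ! : ℚ) ^ 2 * ∑ k ∈ range (m + 1), rise α k * rise (1 - α) k / (k ! : ℚ) ^ 2 := by
  rw [clearedSum, mul_sum]
  refine sum_congr rfl fun k hk => ?_
  have hk0 : (k ! : ℚ) ≠ 0 := by positivity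
  rw [Nat.cast_div (Nat.factorial_dvd_factorial (mem_range_succ_iff.mp hk)) hk0, risePair, rise,
    rise, ← prod_mul_distrib]
  field_simp

section Padic

variable {p : ℕ} [Fact p.Prime]

lemma padicNorm_eq_norm_of_coe_eq {x : ℚ} {A : ℤ_[p]} (hA : (A : ℚ_[p]) = x) :
    (padicNorm p x : ℝ) = ‖A‖ := by
  rw [PadicInt.norm_def, hA, Padic.eq_padicNorm]

lemma padicNorm_le_of_toZModPow_eq_zero {x : ℚ} {A : ℤ_[p]} (hA : (A : ℚ_[p]) = x) {n : ℕ}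
    (h : PadicInt.toZModPow n A = 0) : padicNorm p x ≤ ((p : ℚ) ^ n)⁻¹ := by
  rw [← RingHom.mem_ker, PadicInt.ker_toZModPow, ← PadicInt.norm_le_pow_iff_mem_span_pow,
    ← padicNorm_eq_norm_of_coe_eq hA, zpow_neg, zpow_natCast] at h
  rw [← Rat.cast_le (K := ℝ)]
  push_cast
  exact h

lemma dvd_of_padicNorm_lt_one {x : ℚ} {A : ℤ_[p]} (hA : (A : ℚ_[p]) = x)
    (h : padicNorm p x < 1) : (p : ℤ_[p]) ∣ A := by
  rw [← PadicInt.norm_lt_one_iff_dvd, ← padicNorm_eq_norm_of_coe_eq hA]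
  exact_mod_cast h

end Padic

/-- Z.-W. Sun's congruence: for a prime `p ≥ 5` and a `p`-integral rational `α`
with least nonnegative residue `a = {α}_p ≥ 1`,
`∑_{k=0}^{p-1} (α)_k (1-α)_k / (k!)² ≡ (-1)^{a-1} (mod p²)`. -/
theorem sun_2F1 (p : ℕ) (hp : p.Prime) (hp5 : 5 ≤ p)
    (α : ℚ) (hα : padicNorm p α ≤ 1)
    (a : ℕ) (h1a : 1 ≤ a) (hap : a < p) (hres : padicNorm p (α - a) ≤ ((p : ℚ))⁻¹) :
    padicNorm p
        ((∑ k ∈ Finset.range p, rise α k * rise (1 - α) k / ((k.factorial : ℚ))^2)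
          - (-1 : ℚ)^(a - 1))
      ≤ ((p : ℚ)^2)⁻¹ := by
  have := Fact.mk hp
  obtain ⟨m, rfl⟩ : ∃ m, p = m + 1 := ⟨p - 1, by omega⟩
  let A : ℤ_[m + 1] := ⟨α, by rw [Padic.eq_padicNorm]; exact_mod_cast hα⟩
  obtain ⟨B, hB⟩ : ((m + 1 : ℕ) : ℤ_[m + 1]) ∣ A - a :=
    dvd_of_padicNorm_lt_one (x := α - a) (by push_cast; rfl)
      (hres.trans_lt (inv_lt_one_of_one_lt₀ (by exact_mod_cast hp.one_lt)))
  have hA_mod : PadicInt.toZModPow 2 A = a + (m + 1 : ℕ) * PadicInt.toZModPow 2 B := by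
    simp [eq_add_of_sub_eq' hB]
  have hG_mod :
      PadicInt.toZModPow 2 (clearedSum m A - (m ! : ℤ_[m + 1]) ^ 2 * (-1) ^ (a - 1)) = 0 := by
    rw [map_sub, map_clearedSum, hA_mod,
      clearedSum_natCast_add_of_dvd hp (by omega) (dvd_mul_right _ _) h1a (by omega)]
    simp [mul_comm]
  have hG_coe : ((clearedSum m A - (m ! : ℤ_[m + 1]) ^ 2 * (-1) ^ (a - 1) : ℤ_[m + 1]) : ℚ_[m + 1])
      = ((clearedSum m α - (m ! : ℚ) ^ 2 * (-1) ^ (a - 1) : ℚ) : ℚ_[m + 1]) := by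
    push_cast
    rw [← eq_ratCast (Rat.castHom ℚ_[m + 1]), map_clearedSum]
    exact congrArg (· - _) (map_clearedSum PadicInt.Coe.ringHom m A)
  have hfac : padicNorm (m + 1) ((m ! : ℚ) ^ 2) = 1 := by
    rw [← Nat.cast_pow, padicNorm.nat_eq_one_iff]
    exact hp.dvd_factorial.not.mpr (by omega) ∘ hp.dvd_of_dvd_pow
  have key := padicNorm_le_of_toZModPow_eq_zero hG_coe hG_mod
  rwa [clearedSum_eq_factorial_sq_mul_sum_rise, ← mul_sub, padicNorm.mul, hfac, one_mul] at key
end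

section
/- For a prime p ≥ 5, ∑_{k=0}^{p-1} ((1/2)_k)^2 / (k!)^2 ≡ (-1)^{(p-1)/2} (mod p^2), i.e., the truncated ₂F₁[1/2, 1/2; 1 | 1]_p is congruent to the Legendre symbol (-1/p) modulo p². -/
open Finset Polynomial
open scoped Nat

theorem sum_range_neg_one_pow_mul_choose_mul_add_choose (m : ℕ) :
    ∑ k ∈ range (m + 1), (-1 : ℤ) ^ k * m.choose k * (m + k).choose k = (-1) ^ m := by
  have key : ∑ k ∈ range (m + 1), C ((-1 : ℤ) ^ k * m.choose k) * (X + 1) ^ (m + k)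
      = C ((-1) ^ m) * ((X + 1) ^ m * X ^ m) := by
    calc _ = (X + 1) ^ m *
            ∑ k ∈ range (m + 1), (-(X + 1)) ^ k * 1 ^ (m - k) * (m.choose k : ℤ[X]) := by
          rw [mul_sum]; refine sum_congr rfl fun k _ => ?_
          simp only [map_mul, map_pow, map_neg, map_one, map_natCast, one_pow, pow_add,
            neg_pow (X + 1 : ℤ[X])]
          ring
      _ = (X + 1) ^ m * (-(X + 1) + 1) ^ m := by rw [add_pow (-(X + 1)) 1]
      _ = _ := by simp only [map_pow, map_neg, map_one]; ring
  have hcoeff := congrArg (coeff · m) key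
  simp only [finsetSum_coeff, coeff_C_mul, coeff_X_add_one_pow, coeff_mul_X_pow', le_refl,
    if_true, Nat.sub_self, Nat.choose_zero_right, Nat.cast_one, mul_one] at hcoeff
  rw [← hcoeff]
  exact sum_congr rfl fun k _ => by rw [Nat.choose_symm_add]

theorem rise_natCast_add_one (m k : ℕ) : rise (m + 1) k = k ! * (m + k).choose k := by
  rw [← Nat.cast_mul, ← Nat.ascFactorial_eq_factorial_mul_choose,
    Nat.ascFactorial_eq_prod_range, rise]
  push_cast; rfl

theorem rise_neg_natCast (m k : ℕ) : rise (-m) k = (-1) ^ k * k ! * m.choose k := by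
  rw [mul_assoc, ← Nat.cast_mul, ← Nat.descFactorial_eq_factorial_mul_choose,
    ← descPochhammer_eval_eq_descFactorial, descPochhammer_eval_eq_prod_range, rise]
  have h := prod_neg (s := range k) fun j : ℕ => (m - j : ℚ)
  rw [card_range] at h
  rw [← h]
  exact prod_congr rfl fun i _ => by ring

theorem rise_sub_mul_rise_add (c t : ℚ) (k : ℕ) :
    rise (c - t) k * rise (c + t) k = ∏ i ∈ range k, ((c + i) ^ 2 - t ^ 2) := by
  rw [rise, rise, ← prod_mul_distrib]
  exact prod_congr rfl fun i _ => by ring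

theorem sum_range_rise_neg_mul_rise_add_one_div_sq {m n : ℕ} (hmn : m < n) :
    ∑ k ∈ range n, rise (-m) k * rise (m + 1) k / (k ! : ℚ) ^ 2 = (-1) ^ m := by
  have hterm : ∀ k, rise (-m) k * rise (m + 1) k / (k ! : ℚ) ^ 2
      = ((-1 : ℤ) ^ k * m.choose k * (m + k).choose k : ℤ) := fun k => by
    rw [rise_neg_natCast, rise_natCast_add_one]
    field_simp
    push_cast; ring
  simp_rw [hterm]
  rw [← sum_subset (range_subset_range.2 hmn) fun k _ hk => ?_]
  · exact_mod_cast sum_range_neg_one_pow_mul_choose_mul_add_choose m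
  · rw [Nat.choose_eq_zero_of_lt (by simpa using hk)]; simp

namespace padicNorm

variable {p : ℕ} [Fact p.Prime]

theorem prod_le_one {ι : Type*} {s : Finset ι} {a : ι → ℚ}
    (ha : ∀ i ∈ s, padicNorm p (a i) ≤ 1) :
    padicNorm p (∏ i ∈ s, a i) ≤ 1 := by
  rw [show padicNorm p (∏ i ∈ s, a i) = ∏ i ∈ s, padicNorm p (a i) from
    map_prod (IsAbsoluteValue.abvHom (padicNorm p)) a s]
  exact Finset.prod_le_one (fun i _ => padicNorm.nonneg _) ha

theorem prod_sub_prod_le {ι : Type*} {s : Finset ι} {a b : ι → ℚ} {ε : ℚ} (hε : 0 ≤ ε)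
    (ha : ∀ i ∈ s, padicNorm p (a i) ≤ 1) (hb : ∀ i ∈ s, padicNorm p (b i) ≤ 1)
    (hab : ∀ i ∈ s, padicNorm p (a i - b i) ≤ ε) :
    padicNorm p (∏ i ∈ s, a i - ∏ i ∈ s, b i) ≤ ε := by
  classical
  induction s using Finset.induction_on with
  | empty => simpa using hε
  | insert j s hj ih =>
    simp only [mem_insert, forall_eq_or_imp] at ha hb hab
    rw [prod_insert hj, prod_insert hj,
      show ∀ x y z w : ℚ, x * y - z * w = x * (y - w) + (x - z) * w by intros; ring]
    refine padicNorm.nonarchimedean.trans (max_le ?_ ?_) <;> rw [padicNorm.mul]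
    · exact (mul_le_of_le_one_left (padicNorm.nonneg _) ha.1).trans (ih ha.2 hb.2 hab.2)
    · exact (mul_le_of_le_one_right (padicNorm.nonneg _) (prod_le_one hb.2)).trans hab.1

theorem rise_sq_sub_rise_mul_rise_le {c t : ℚ} (hc : padicNorm p c ≤ 1)
    (ht : padicNorm p t ≤ 1) (k : ℕ) :
    padicNorm p (rise c k ^ 2 - rise (c - t) k * rise (c + t) k) ≤ padicNorm p t ^ 2 := by
  have hci (i : ℕ) : padicNorm p ((c + i) ^ 2) ≤ 1 := by
    rw [IsAbsoluteValue.abv_pow (padicNorm p)]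
    exact pow_le_one₀ (padicNorm.nonneg _)
      (padicNorm.nonarchimedean.trans (max_le hc (padicNorm.of_nat i)))
  rw [rise, ← prod_pow, rise_sub_mul_rise_add]
  refine prod_sub_prod_le (by positivity) (fun i _ => hci i) (fun i _ => ?_) (fun i _ => ?_)
  · refine padicNorm.sub.trans (max_le (hci i) ?_)
    rw [IsAbsoluteValue.abv_pow (padicNorm p)]
    exact pow_le_one₀ (padicNorm.nonneg _) ht
  · rw [sub_sub_cancel, IsAbsoluteValue.abv_pow (padicNorm p)]

end padicNorm

/-- Mortenson's congruence: for a prime `p ≥ 5`,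
`∑_{k=0}^{p-1} ((1/2)_k)² / (k!)² ≡ (-1)^{(p-1)/2} (mod p²)`. -/
theorem mortenson_half (p : ℕ) (hp : p.Prime) (hp5 : 5 ≤ p) :
    padicNorm p
        ((∑ k ∈ Finset.range p, (rise (1/2 : ℚ) k)^2 / ((k.factorial : ℚ))^2)
          - (-1 : ℚ)^((p - 1) / 2))
      ≤ ((p : ℚ)^2)⁻¹ := by
  have := Fact.mk hp
  set m := (p - 1) / 2
  have hpm : (p : ℚ) = 2 * m + 1 := by
    have := hp.eq_two_or_odd
    exact_mod_cast (by omega : p = 2 * m + 1)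
  have h2 : padicNorm p 2 = 1 := by
    exact_mod_cast (padicNorm.nat_eq_one_iff 2).2 fun h => by
      have := Nat.le_of_dvd two_pos h; omega
  have hc : padicNorm p (1 / 2) ≤ 1 := by rw [padicNorm.div, h2, padicNorm.one, div_one]
  have ht : padicNorm p (p / 2) = (p : ℚ)⁻¹ := by
    rw [padicNorm.div, h2, padicNorm.padicNorm_p_of_prime, div_one]
  rw [← sum_range_rise_neg_mul_rise_add_one_div_sq (n := p) (by omega), ← sum_sub_distrib]
  refine padicNorm.sum_le' (fun k hk => ?_) (by positivity)
  have hfac : padicNorm p (k ! : ℚ) = 1 := by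
    exact_mod_cast (padicNorm.nat_eq_one_iff _).2 fun h =>
      (mem_range.1 hk).not_ge ((hp.dvd_factorial).1 h)
  rw [div_sub_div_same, padicNorm.div, IsAbsoluteValue.abv_pow (padicNorm p), hfac, one_pow,
    div_one, show -(m : ℚ) = 1 / 2 - p / 2 by rw [hpm]; ring,
    show (m : ℚ) + 1 = 1 / 2 + p / 2 by rw [hpm]; ring, ← inv_pow, ← ht]
  exact padicNorm.rise_sq_sub_rise_mul_rise_le hc
    (ht ▸ inv_le_one_of_one_le₀ (by exact_mod_cast hp.one_le)) k
end
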